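/- arXiv:1006.5730 — 4 statements merged into one kernel-verified Lean document; each statement's English description precedes it below -/
import Mathlib

section
/- For all integers k₁, ℓ₁, k₂, ℓ₂ ≥ 1 and all real parameters α, β, γ, the covariance of the spatial autoregressive process satisfies Cov(X_{k₁,ℓ₁}, X_{k₂,ℓ₂}) = Σ_{i=1}^{min(k₁,k₂)} Σ_{j=1}^{min(ℓ₁,ℓ₂)} G(k₁−i, ℓ₁−j; α, β, γ) · G(k₂−i, ℓ₂−j; α, β, γ). -/
open MeasureTheory ProbabilityTheory Filter

/-- `G m n α β γ = Σ_{r=0}^{min(m,n)} ((m+n−r)!/((m−r)!(n−r)!r!)) α^{m−r} β^{n−r} γ^r`. -/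
noncomputable def G (m n : ℕ) (α β γ : ℝ) : ℝ :=
  ∑ r ∈ Finset.range (min m n + 1),
    ((Nat.factorial (m + n - r) : ℝ) /
      ((Nat.factorial (m - r) : ℝ) * (Nat.factorial (n - r) : ℝ) * (Nat.factorial r : ℝ))) *
      α ^ (m - r) * β ^ (n - r) * γ ^ r

/-- The covariance of two real random variables. -/
noncomputable def cov {Ω : Type*} [MeasurableSpace Ω] (P : Measure Ω) (X Y : Ω → ℝ) : ℝ :=
  ∫ ω, (X ω - ∫ x, X x ∂P) * (Y ω - ∫ x, Y x ∂P) ∂P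

/-!
Unrolling the recursion gives `X k ℓ = ∑_{i ≤ k, j ≤ ℓ} G (k - i) (ℓ - j) ε i j`: the trinomial sum `G m n`
is the weighted number of lattice paths from `(0, 0)` to `(m, n)` with steps `(1, 0)`, `(0, 1)`, `(1, 1)`
of weights `α`, `β`, `γ`, so it satisfies the same recursion
`G (m + 1) (n + 1) = α G m (n + 1) + β G (m + 1) n + γ G m n` with `G m 0 = α ^ m`, `G 0 n = β ^ n`,
and a solution of the recursion with zero boundary values is unique. The innovations are independent
with unit variance, hence orthonormal for the covariance, so by bilinearity only the common indices
`i ≤ min k₁ k₂`, `j ≤ min ℓ₁ ℓ₂` contribute to the covariance.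
-/

-- Pascal's rule for the trinomial coefficient `(m + n - r)! / ((m - r)! (n - r)! r!)`.
theorem Nat.choose_mul_choose_succ_succ_succ (m n r : ℕ) :
    (m + 1).choose (r + 1) * (m + n + 1 - r).choose (m + 1) =
      m.choose (r + 1) * (m + n - r).choose m +
        (m + 1).choose (r + 1) * (m + n - r).choose (m + 1) + m.choose r * (m + n - r).choose m := by
  rcases le_or_gt r m with h | h
  · rw [show m + n + 1 - r = m + n - r + 1 by omega, Nat.choose_succ_succ m r,
      Nat.choose_succ_succ (m + n - r) m]
    ring
  · simp [Nat.choose_eq_zero_of_lt h, Nat.choose_eq_zero_of_lt (Nat.lt_succ_of_lt h),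
      Nat.choose_eq_zero_of_lt (Nat.succ_lt_succ h)]

-- The `r`-th summand of `G m n`; with the factorials regrouped into binomial coefficients it
-- vanishes for `r > min m n`, so `G` may be summed over any longer range.
noncomputable def GTerm (m n r : ℕ) (α β γ : ℝ) : ℝ :=
  (m.choose r * (m + n - r).choose m : ℝ) * α ^ (m - r) * β ^ (n - r) * γ ^ r

section GTerm

variable {m n r : ℕ} {α β γ : ℝ}

theorem GTerm_eq_zero_of_lt_left (h : m < r) : GTerm m n r α β γ = 0 := by
  simp [GTerm, Nat.choose_eq_zero_of_lt h]

theorem GTerm_eq_zero_of_lt_right (h : n < r) : GTerm m n r α β γ = 0 := by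
  rcases lt_or_ge m r with hm | hm
  · exact GTerm_eq_zero_of_lt_left hm
  · simp [GTerm, Nat.choose_eq_zero_of_lt (show m + n - r < m by omega)]

theorem GTerm_eq_of_le (hm : r ≤ m) (hn : r ≤ n) :
    GTerm m n r α β γ = (Nat.factorial (m + n - r) : ℝ) /
      ((Nat.factorial (m - r) : ℝ) * (Nat.factorial (n - r) : ℝ) * (Nat.factorial r : ℝ)) *
        α ^ (m - r) * β ^ (n - r) * γ ^ r := by
  rw [GTerm, Nat.cast_choose ℝ hm, Nat.cast_choose ℝ (show m ≤ m + n - r by omega),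
    show m + n - r - m = n - r by omega]
  field_simp

theorem G_eq_sum_range_GTerm {K : ℕ} (hK : min m n < K) :
    G m n α β γ = ∑ r ∈ Finset.range K, GTerm m n r α β γ := by
  rw [← Finset.sum_subset (Finset.range_subset_range.2 hK)]
  · refine Finset.sum_congr rfl fun r hr => ?_
    have hr : r ≤ min m n := Nat.lt_succ_iff.1 (Finset.mem_range.1 hr)
    rw [GTerm_eq_of_le (hr.trans (min_le_left m n)) (hr.trans (min_le_right m n))]
  · intro r _ hr
    rcases lt_or_ge m r with h | h
    · exact GTerm_eq_zero_of_lt_left h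
    · exact GTerm_eq_zero_of_lt_right (by simp at hr; omega)

theorem GTerm_succ_succ_zero :
    GTerm (m + 1) (n + 1) 0 α β γ = α * GTerm m (n + 1) 0 α β γ + β * GTerm (m + 1) n 0 α β γ := by
  simp only [GTerm, Nat.choose_zero_right, Nat.sub_zero, pow_zero]
  rw [show m + 1 + (n + 1) = (m + n + 1) + 1 by omega, Nat.choose_succ_succ,
    show m + (n + 1) = m + n + 1 by omega, show m + 1 + n = m + n + 1 by omega]
  push_cast
  ring

theorem GTerm_succ_succ_succ :
    GTerm (m + 1) (n + 1) (r + 1) α β γ =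
      α * GTerm m (n + 1) (r + 1) α β γ + β * GTerm (m + 1) n (r + 1) α β γ +
        γ * GTerm m n r α β γ := by
  -- Where `m - (r + 1)` or `n - (r + 1)` truncates, the binomial factor in front vanishes.
  have hα : (m.choose (r + 1) : ℝ) * (α * α ^ (m - (r + 1))) = m.choose (r + 1) * α ^ (m - r) := by
    rcases lt_or_ge r m with h | h
    · rw [← pow_succ', show m - (r + 1) + 1 = m - r by omega]
    · simp [Nat.choose_eq_zero_of_lt (Nat.lt_succ_of_le h)]
  have hβ : ((m + n - r).choose (m + 1) : ℝ) * (β * β ^ (n - (r + 1))) =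
      (m + n - r).choose (m + 1) * β ^ (n - r) := by
    rcases lt_or_ge r n with h | h
    · rw [← pow_succ', show n - (r + 1) + 1 = n - r by omega]
    · simp [Nat.choose_eq_zero_of_lt (show m + n - r < m + 1 by omega)]
  have hpascal := congrArg (Nat.cast (R := ℝ)) (Nat.choose_mul_choose_succ_succ_succ m n r)
  push_cast at hpascal
  simp only [GTerm, Nat.add_sub_add_right, show m + 1 + (n + 1) - (r + 1) = m + n + 1 - r by omega,
    show m + (n + 1) - (r + 1) = m + n - r by omega, show m + 1 + n - (r + 1) = m + n - r by omega]
  linear_combination (α ^ (m - r) * β ^ (n - r) * γ ^ (r + 1)) * hpascal -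
    (β ^ (n - r) * γ ^ (r + 1) * ((m + n - r).choose m : ℝ)) * hα -
    (((m + 1).choose (r + 1) : ℝ) * α ^ (m - r) * γ ^ (r + 1)) * hβ

theorem G_succ_succ (m n : ℕ) (α β γ : ℝ) :
    G (m + 1) (n + 1) α β γ = α * G m (n + 1) α β γ + β * G (m + 1) n α β γ + γ * G m n α β γ := by
  rw [G_eq_sum_range_GTerm (K := m + 2) (by omega), G_eq_sum_range_GTerm (m := m) (K := m + 2) (by omega),
    G_eq_sum_range_GTerm (n := n) (K := m + 2) (by omega),
    G_eq_sum_range_GTerm (m := m) (n := n) (K := m + 1) (by omega)]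
  simp only [Finset.sum_range_succ' _ (m + 1), GTerm_succ_succ_succ, GTerm_succ_succ_zero,
    Finset.mul_sum, Finset.sum_add_distrib, mul_add]
  ring

end GTerm

theorem G_zero_right (m : ℕ) (α β γ : ℝ) : G m 0 α β γ = α ^ m := by
  simp [G_eq_sum_range_GTerm (m := m) (n := 0) (K := 1) (by omega), GTerm]

theorem G_zero_left (n : ℕ) (α β γ : ℝ) : G 0 n α β γ = β ^ n := by
  simp [G_eq_sum_range_GTerm (m := 0) (n := n) (K := 1) (by omega), GTerm]

theorem eq_of_succ_succ_recursion {R : Type*} [Semiring R] {Y Z : ℕ → ℕ → R} (a b c : R)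
    (e : ℕ → ℕ → R)
    (hY : ∀ k ℓ, Y (k + 1) (ℓ + 1) = a * Y k (ℓ + 1) + b * Y (k + 1) ℓ + c * Y k ℓ + e (k + 1) (ℓ + 1))
    (hZ : ∀ k ℓ, Z (k + 1) (ℓ + 1) = a * Z k (ℓ + 1) + b * Z (k + 1) ℓ + c * Z k ℓ + e (k + 1) (ℓ + 1))
    (hright : ∀ k, Y k 0 = Z k 0) (hleft : ∀ ℓ, Y 0 ℓ = Z 0 ℓ) : Y = Z := by
  funext k
  induction k with
  | zero => exact funext hleft
  | succ k ihk =>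
    funext ℓ
    induction ℓ with
    | zero => exact hright _
    | succ ℓ ihℓ => rw [hY, hZ, ihk, ihℓ]

noncomputable def GConv (α β γ : ℝ) (e : ℕ → ℕ → ℝ) (k ℓ : ℕ) : ℝ :=
  ∑ i ∈ Finset.Icc 1 k, ∑ j ∈ Finset.Icc 1 ℓ, G (k - i) (ℓ - j) α β γ * e i j

section GConv

variable (α β γ : ℝ)

theorem sum_Icc_G_succ_mul (m ℓ : ℕ) (f : ℕ → ℝ) :
    ∑ j ∈ Finset.Icc 1 (ℓ + 1), G (m + 1) (ℓ + 1 - j) α β γ * f j =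
      α * ∑ j ∈ Finset.Icc 1 (ℓ + 1), G m (ℓ + 1 - j) α β γ * f j +
        β * ∑ j ∈ Finset.Icc 1 ℓ, G (m + 1) (ℓ - j) α β γ * f j +
        γ * ∑ j ∈ Finset.Icc 1 ℓ, G m (ℓ - j) α β γ * f j := by
  have hterm : ∀ j ∈ Finset.Icc 1 ℓ, G (m + 1) (ℓ + 1 - j) α β γ * f j =
      α * (G m (ℓ + 1 - j) α β γ * f j) + β * (G (m + 1) (ℓ - j) α β γ * f j) +
        γ * (G m (ℓ - j) α β γ * f j) := by
    intro j hj
    rw [show ℓ + 1 - j = ℓ - j + 1 by simp at hj; omega, G_succ_succ]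
    ring
  rw [Finset.sum_Icc_succ_top (by omega), Finset.sum_Icc_succ_top (by omega), Nat.sub_self,
    G_zero_right, G_zero_right, Finset.sum_congr rfl hterm, Finset.sum_add_distrib,
    Finset.sum_add_distrib, ← Finset.mul_sum, ← Finset.mul_sum, ← Finset.mul_sum, pow_succ]
  ring

theorem sum_Icc_G_zero_mul (ℓ : ℕ) (f : ℕ → ℝ) :
    ∑ j ∈ Finset.Icc 1 (ℓ + 1), G 0 (ℓ + 1 - j) α β γ * f j =
      β * ∑ j ∈ Finset.Icc 1 ℓ, G 0 (ℓ - j) α β γ * f j + f (ℓ + 1) := by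
  have hterm : ∀ j ∈ Finset.Icc 1 ℓ, G 0 (ℓ + 1 - j) α β γ * f j = β * (G 0 (ℓ - j) α β γ * f j) := by
    intro j hj
    rw [G_zero_left, G_zero_left, show ℓ + 1 - j = ℓ - j + 1 by simp at hj; omega, pow_succ]
    ring
  rw [Finset.sum_Icc_succ_top (by omega), Nat.sub_self, G_zero_left, Finset.sum_congr rfl hterm,
    Finset.mul_sum, pow_zero, one_mul]

variable (e : ℕ → ℕ → ℝ)

theorem GConv_zero_right (k : ℕ) : GConv α β γ e k 0 = 0 := by
  simp [GConv]

theorem GConv_zero_left (ℓ : ℕ) : GConv α β γ e 0 ℓ = 0 := by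
  simp [GConv]

theorem GConv_succ_succ (k ℓ : ℕ) :
    GConv α β γ e (k + 1) (ℓ + 1) = α * GConv α β γ e k (ℓ + 1) + β * GConv α β γ e (k + 1) ℓ +
      γ * GConv α β γ e k ℓ + e (k + 1) (ℓ + 1) := by
  have hrow : ∀ i ∈ Finset.Icc 1 k,
      ∑ j ∈ Finset.Icc 1 (ℓ + 1), G (k + 1 - i) (ℓ + 1 - j) α β γ * e i j =
        α * ∑ j ∈ Finset.Icc 1 (ℓ + 1), G (k - i) (ℓ + 1 - j) α β γ * e i j +
          β * ∑ j ∈ Finset.Icc 1 ℓ, G (k + 1 - i) (ℓ - j) α β γ * e i j +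
          γ * ∑ j ∈ Finset.Icc 1 ℓ, G (k - i) (ℓ - j) α β γ * e i j := by
    intro i hi
    rw [show k + 1 - i = k - i + 1 by simp at hi; omega]
    exact sum_Icc_G_succ_mul α β γ (k - i) ℓ (e i)
  simp only [GConv, Finset.sum_Icc_succ_top (show 1 ≤ k + 1 by omega), Nat.sub_self]
  rw [Finset.sum_congr rfl hrow, sum_Icc_G_zero_mul, Finset.sum_add_distrib, Finset.sum_add_distrib,
    ← Finset.mul_sum, ← Finset.mul_sum, ← Finset.mul_sum]
  ring

theorem eq_GConv_of_recursion {Y : ℕ → ℕ → ℝ}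
    (hrec : ∀ k ℓ, 1 ≤ k → 1 ≤ ℓ →
      Y k ℓ = α * Y (k - 1) ℓ + β * Y k (ℓ - 1) + γ * Y (k - 1) (ℓ - 1) + e k ℓ)
    (hright : ∀ k, Y k 0 = 0) (hleft : ∀ ℓ, Y 0 ℓ = 0) :
    Y = GConv α β γ e :=
  eq_of_succ_succ_recursion α β γ e (fun k ℓ => by simpa using hrec (k + 1) (ℓ + 1) (by omega) (by omega))
    (GConv_succ_succ α β γ e) (fun k => by simp [hright, GConv_zero_right])
    (fun ℓ => by simp [hleft, GConv_zero_left])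

end GConv

section Covariance

variable {Ω ι : Type*} [MeasurableSpace Ω] {μ : Measure Ω} [IsFiniteMeasure μ] {ξ : ι → Ω → ℝ}

theorem covariance_eq_ite_of_iIndepFun [DecidableEq ι] (hind : iIndepFun ξ μ)
    (hmeas : ∀ i, AEStronglyMeasurable (ξ i) μ) (hvar : ∀ i, Var[ξ i; μ] = 1) (i j : ι) :
    cov[ξ i, ξ j; μ] = if i = j then 1 else 0 := by
  have hL2 : ∀ i, MemLp (ξ i) 2 μ := fun i =>
    memLp_two_of_variance_ne_zero (hmeas i) (by simp [hvar i])
  split_ifs with h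
  · rw [h, covariance_self (hmeas j).aemeasurable, hvar j]
  · exact (hind.indepFun h).covariance_eq_zero (hL2 i) (hL2 j)

theorem covariance_fun_sum_fun_sum_of_orthonormal [DecidableEq ι] {s t : Finset ι}
    (hs : ∀ i ∈ s, MemLp (ξ i) 2 μ) (ht : ∀ j ∈ t, MemLp (ξ j) 2 μ)
    (horth : ∀ i ∈ s, ∀ j ∈ t, cov[ξ i, ξ j; μ] = if i = j then 1 else 0) (a b : ι → ℝ) :
    cov[fun ω => ∑ i ∈ s, a i * ξ i ω, fun ω => ∑ j ∈ t, b j * ξ j ω; μ] =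
      ∑ i ∈ s ∩ t, a i * b i := by
  rw [covariance_fun_sum_fun_sum' (X := fun i ω => a i * ξ i ω) (Y := fun j ω => b j * ξ j ω)
    (fun i hi => (hs i hi).const_mul (a i)) (fun j hj => (ht j hj).const_mul (b j)),
    ← Finset.sum_ite_mem]
  refine Finset.sum_congr rfl fun i hi => ?_
  simp_rw [covariance_const_mul_left, covariance_const_mul_right]
  rw [Finset.sum_congr rfl fun j hj => by rw [horth i hi j hj]]
  simp [Finset.sum_ite_eq]

end Covariance

theorem covariance_representation_general
    {Ω : Type*} [MeasurableSpace Ω] (P : Measure Ω) [IsProbabilityMeasure P]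
    (ε : ℕ → ℕ → Ω → ℝ)
    (hmeas : ∀ k ℓ : ℕ, Measurable (ε k ℓ))
    (hindep : iIndepFun
      (fun p : {p : ℕ × ℕ // 1 ≤ p.1 ∧ 1 ≤ p.2} => ε p.1.1 p.1.2) P)
    (hvar : ∀ k ℓ : ℕ, 1 ≤ k → 1 ≤ ℓ → variance (ε k ℓ) P = 1)
    (α β γ : ℝ)
    (X : ℕ → ℕ → Ω → ℝ)
    (hrec : ∀ k ℓ : ℕ, 1 ≤ k → 1 ≤ ℓ → ∀ ω : Ω,
      X k ℓ ω = α * X (k - 1) ℓ ω + β * X k (ℓ - 1) ω + γ * X (k - 1) (ℓ - 1) ω + ε k ℓ ω)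
    (hbd1 : ∀ k : ℕ, ∀ ω : Ω, X k 0 ω = 0)
    (hbd2 : ∀ ℓ : ℕ, ∀ ω : Ω, X 0 ℓ ω = 0) :
    ∀ k₁ ℓ₁ k₂ ℓ₂ : ℕ, 1 ≤ k₁ → 1 ≤ ℓ₁ → 1 ≤ k₂ → 1 ≤ ℓ₂ →
      cov P (X k₁ ℓ₁) (X k₂ ℓ₂) =
        ∑ i ∈ Finset.Icc 1 (min k₁ k₂), ∑ j ∈ Finset.Icc 1 (min ℓ₁ ℓ₂),
          G (k₁ - i) (ℓ₁ - j) α β γ * G (k₂ - i) (ℓ₂ - j) α β γ := by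
  classical
  intro k₁ ℓ₁ k₂ ℓ₂ _ _ _ _
  have hX : ∀ k ℓ, X k ℓ = fun ω =>
      ∑ p ∈ Finset.Icc 1 k ×ˢ Finset.Icc 1 ℓ, G (k - p.1) (ℓ - p.2) α β γ * ε p.1 p.2 ω := by
    intro k ℓ
    funext ω
    rw [Finset.sum_product, ← GConv, ← eq_GConv_of_recursion α β γ (fun i j => ε i j ω)
      (fun k ℓ hk hℓ => hrec k ℓ hk hℓ ω) (fun k => hbd1 k ω) (fun ℓ => hbd2 ℓ ω)]
  have hbox : ∀ k ℓ, ∀ p ∈ Finset.Icc 1 k ×ˢ Finset.Icc 1 ℓ, 1 ≤ p.1 ∧ 1 ≤ p.2 := by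
    simp +contextual [Finset.mem_product]
  have horth := covariance_eq_ite_of_iIndepFun hindep (fun p => (hmeas _ _).aestronglyMeasurable)
    (fun p => hvar _ _ p.2.1 p.2.2)
  have hL2 : ∀ p : ℕ × ℕ, 1 ≤ p.1 ∧ 1 ≤ p.2 → MemLp (ε p.1 p.2) 2 P := fun p hp =>
    memLp_two_of_variance_ne_zero (hmeas _ _).aestronglyMeasurable (by simp [hvar _ _ hp.1 hp.2])
  have hIcc : ∀ a b : ℕ, Finset.Icc 1 a ∩ Finset.Icc 1 b = Finset.Icc 1 (min a b) := fun a b => by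
    ext; simp; omega
  change covariance _ _ P = _
  rw [hX, hX, covariance_fun_sum_fun_sum_of_orthonormal (ξ := fun p : ℕ × ℕ => ε p.1 p.2)
    (fun p hp => hL2 p (hbox _ _ p hp)) (fun p hp => hL2 p (hbox _ _ p hp))
    (fun p hp q hq => by simpa [Subtype.ext_iff] using horth ⟨p, hbox _ _ p hp⟩ ⟨q, hbox _ _ q hq⟩),
    Finset.product_inter_product, hIcc, hIcc, Finset.sum_product]

theorem covariance_representation
    {Ω : Type*} [MeasurableSpace Ω] (P : Measure Ω) [IsProbabilityMeasure P]
    (ε : ℕ → ℕ → Ω → ℝ)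
    (hmeas : ∀ k ℓ : ℕ, Measurable (ε k ℓ))
    (hindep : iIndepFun
      (fun p : {p : ℕ × ℕ // 1 ≤ p.1 ∧ 1 ≤ p.2} => ε p.1.1 p.1.2) P)
    (hmean : ∀ k ℓ : ℕ, 1 ≤ k → 1 ≤ ℓ → ∫ ω, ε k ℓ ω ∂P = 0)
    (hvar : ∀ k ℓ : ℕ, 1 ≤ k → 1 ≤ ℓ → variance (ε k ℓ) P = 1)
    (α β γ : ℝ)
    (X : ℕ → ℕ → Ω → ℝ)
    (hrec : ∀ k ℓ : ℕ, 1 ≤ k → 1 ≤ ℓ → ∀ ω : Ω,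
      X k ℓ ω = α * X (k - 1) ℓ ω + β * X k (ℓ - 1) ω + γ * X (k - 1) (ℓ - 1) ω + ε k ℓ ω)
    (hbd1 : ∀ k : ℕ, ∀ ω : Ω, X k 0 ω = 0)
    (hbd2 : ∀ ℓ : ℕ, ∀ ω : Ω, X 0 ℓ ω = 0) :
    ∀ k₁ ℓ₁ k₂ ℓ₂ : ℕ, 1 ≤ k₁ → 1 ≤ ℓ₁ → 1 ≤ k₂ → 1 ≤ ℓ₂ →
      cov P (X k₁ ℓ₁) (X k₂ ℓ₂) =
        ∑ i ∈ Finset.Icc 1 (min k₁ k₂), ∑ j ∈ Finset.Icc 1 (min ℓ₁ ℓ₂),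
          G (k₁ - i) (ℓ₁ - j) α β γ * G (k₂ - i) (ℓ₂ - j) α β γ :=
  covariance_representation_general P ε hmeas hindep hvar α β γ X hrec hbd1 hbd2
end

section
/- Let m, n be nonnegative integers and let α, β, γ be reals with 0 ≤ α < 1, 0 ≤ β < 1 and αβ + γ > 0. Then G(m,n;α,β,γ) = ((β+γ)/(1−α))^n · P( ξ_m^{(α)} + η_n^{((αβ+γ)/(β+γ))} = m ), where ξ_m^{(α)} and η_n^{((αβ+γ)/(β+γ))} are independent binomial random variables with parameters (m, α) and (n, (αβ+γ)/(β+γ)) respectively (note 0 < (αβ+γ)/(β+γ) ≤ 1 under the hypotheses). -/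
open MeasureTheory ProbabilityTheory Filter

/-- The probability that a binomial random variable with parameters `(n, p)` equals `k`. -/
noncomputable def binomPMF (n : ℕ) (p : ℝ) (k : ℕ) : ℝ :=
  (n.choose k : ℝ) * p ^ k * (1 - p) ^ (n - k)

/-- The probability that the sum of two independent binomial random variables, with
parameters `(n, p)` and `(m, q)` respectively, equals `j`. -/
noncomputable def probSumEq (n : ℕ) (p : ℝ) (m : ℕ) (q : ℝ) (j : ℕ) : ℝ :=
  ∑ i ∈ Finset.range (j + 1), binomPMF n p i * binomPMF m q (j - i)

/-!
Expanding `(αβ + γ)^s` binomially and collapsing the sum over `s` with Vandermonde's identity gives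
`G(m,n;α,β,γ) = Σ_s C(m,s) C(n,s) α^(m-s) β^(n-s) (αβ+γ)^s`.
With `λ = (β+γ)/(1-α)` and `q = (αβ+γ)/(β+γ)` one has `λ(1-q) = β` and `λq(1-α) = αβ+γ`, so the
`s`-th term of this sum is `λ^n P(ξ = m - s) P(η = s)`.
-/

open Finset

theorem Nat.sum_range_choose_mul_choose_add (p n r : ℕ) :
    ∑ t ∈ range (p + 1), p.choose t * n.choose (r + t) = (p + n).choose (p + r) := by
  calc ∑ t ∈ range (p + 1), p.choose t * n.choose (r + t)
      = ∑ k ∈ range (p + 1), p.choose k * n.choose (p + r - k) := by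
        rw [← sum_range_reflect]
        refine sum_congr rfl fun k hk => ?_
        have hkp : k ≤ p := mem_range_succ_iff.mp hk
        rw [Nat.add_sub_cancel, Nat.choose_symm hkp]
        congr 2
        omega
    _ = ∑ k ∈ range (p + r + 1), p.choose k * n.choose (p + r - k) := by
        refine sum_subset (range_subset_range.mpr (by omega)) fun k _ hk => ?_
        rw [Nat.choose_eq_zero_of_lt (by simpa using hk), zero_mul]
    _ = (p + n).choose (p + r) := by
        rw [Nat.add_choose_eq, Nat.sum_antidiagonal_eq_sum_range_succ_mk]

theorem Nat.sum_Ico_choose_mul_choose_mul_choose {m r : ℕ} (n : ℕ) (hrm : r ≤ m) :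
    ∑ s ∈ Ico r (m + 1), m.choose s * n.choose s * s.choose r
      = m.choose r * (m + n - r).choose m := by
  calc ∑ s ∈ Ico r (m + 1), m.choose s * n.choose s * s.choose r
      = ∑ s ∈ Ico r (m + 1), m.choose r * ((m - r).choose (s - r) * n.choose s) := by
        refine sum_congr rfl fun s hs => ?_
        rw [mul_right_comm, Nat.choose_mul (mem_Ico.mp hs).1, mul_assoc]
    _ = m.choose r * ∑ t ∈ range (m - r + 1), (m - r).choose t * n.choose (r + t) := by
        rw [← mul_sum, sum_Ico_eq_sum_range, Nat.sub_add_comm hrm]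
        simp only [Nat.add_sub_cancel_left]
    _ = m.choose r * (m + n - r).choose m := by
        rw [Nat.sum_range_choose_mul_choose_add, Nat.sub_add_cancel hrm, Nat.sub_add_comm hrm]

theorem sum_choose_mul_choose_mul_add_pow {R : Type*} [CommSemiring R] (m n : ℕ) (a b c : R) :
    ∑ s ∈ range (m + 1), (m.choose s * n.choose s : R) * a ^ (m - s) * b ^ (n - s) * (a * b + c) ^ s
      = ∑ r ∈ range (m + 1), (m.choose r * (m + n - r).choose m : R) *
          a ^ (m - r) * b ^ (n - r) * c ^ r := by
  have expand : ∀ s ∈ range (m + 1),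
      (m.choose s * n.choose s : R) * a ^ (m - s) * b ^ (n - s) * (a * b + c) ^ s
        = ∑ r ∈ range (s + 1), (m.choose s * n.choose s * s.choose r : R) *
            (a ^ (m - r) * b ^ (n - r) * c ^ r) := by
    intro s hs
    rcases lt_or_ge n s with hns | hsn
    · simp [Nat.choose_eq_zero_of_lt hns]
    have hsm : s ≤ m := mem_range_succ_iff.mp hs
    rw [add_comm (a * b), add_pow, mul_sum]
    refine sum_congr rfl fun r hr => ?_
    have hrs : r ≤ s := mem_range_succ_iff.mp hr
    rw [show m - r = m - s + (s - r) by omega, show n - r = n - s + (s - r) by omega]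
    ring
  calc _ = ∑ s ∈ range (m + 1), ∑ r ∈ range (s + 1), (m.choose s * n.choose s * s.choose r : R) *
            (a ^ (m - r) * b ^ (n - r) * c ^ r) := sum_congr rfl expand
    _ = ∑ r ∈ range (m + 1), ∑ s ∈ Ico r (m + 1), (m.choose s * n.choose s * s.choose r : R) *
            (a ^ (m - r) * b ^ (n - r) * c ^ r) := by
        simp only [range_eq_Ico]
        exact (sum_Ico_Ico_comm 0 (m + 1) fun r s => _).symm
    _ = _ := by
        refine sum_congr rfl fun r hr => ?_
        have h := congrArg (Nat.cast : ℕ → R)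
          (Nat.sum_Ico_choose_mul_choose_mul_choose n (mem_range_succ_iff.mp hr))
        push_cast at h
        rw [← sum_mul, h]
        ring

theorem cast_factorial_div_eq_choose_mul_choose {K : Type*} [Field K] [CharZero K] {m n r : ℕ}
    (hrm : r ≤ m) (hrn : r ≤ n) :
    ((m + n - r).factorial : K) / ((m - r).factorial * (n - r).factorial * r.factorial)
      = m.choose r * (m + n - r).choose m := by
  rw [Nat.cast_choose K hrm, Nat.cast_choose K (by omega : m ≤ m + n - r),
    show m + n - r - m = n - r by omega]
  have : (m.factorial : K) ≠ 0 := Nat.cast_ne_zero.mpr m.factorial_ne_zero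
  field_simp

theorem G_eq_sum_choose (m n : ℕ) (α β γ : ℝ) :
    G m n α β γ = ∑ r ∈ range (m + 1), (m.choose r * (m + n - r).choose m : ℝ) *
      α ^ (m - r) * β ^ (n - r) * γ ^ r := by
  calc G m n α β γ = ∑ r ∈ range (min m n + 1), (m.choose r * (m + n - r).choose m : ℝ) *
        α ^ (m - r) * β ^ (n - r) * γ ^ r := by
        refine sum_congr rfl fun r hr => ?_
        have hr' : r ≤ min m n := mem_range_succ_iff.mp hr
        rw [cast_factorial_div_eq_choose_mul_choose (le_of_le_min_left hr')
          (le_of_le_min_right hr')]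
    _ = _ := by
        refine sum_subset (range_subset_range.mpr (by omega)) fun r hr hr' => ?_
        simp only [mem_range] at hr hr'
        rw [Nat.choose_eq_zero_of_lt (n := m + n - r) (by omega)]
        simp

theorem pow_mul_binomPMF (l q : ℝ) (n s : ℕ) :
    l ^ n * binomPMF n q s = n.choose s * (l * q) ^ s * (l * (1 - q)) ^ (n - s) := by
  rcases lt_or_ge n s with hns | hsn
  · simp [binomPMF, Nat.choose_eq_zero_of_lt hns]
  obtain ⟨t, rfl⟩ := Nat.exists_eq_add_of_le hsn
  rw [binomPMF, Nat.add_sub_cancel_left, pow_add, mul_pow, mul_pow]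
  ring

theorem pow_mul_probSumEq (l p q : ℝ) (m n : ℕ) :
    l ^ n * probSumEq m p n q m = ∑ s ∈ range (m + 1), (m.choose s * n.choose s : ℝ) *
      p ^ (m - s) * (l * (1 - q)) ^ (n - s) * (l * q * (1 - p)) ^ s := by
  rw [probSumEq, mul_sum, ← sum_range_reflect]
  refine sum_congr rfl fun s hs => ?_
  have hsm : s ≤ m := mem_range_succ_iff.mp hs
  rw [Nat.add_sub_cancel, Nat.sub_sub_self hsm, mul_left_comm, pow_mul_binomPMF, binomPMF,
    Nat.choose_symm hsm, Nat.sub_sub_self hsm]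
  simp only [mul_pow]
  ring

theorem G_eq_binom_prob_second_general (m n : ℕ) (α β γ : ℝ)
    (hα1 : α < 1) (hβ0 : 0 ≤ β) (hγ : 0 < α * β + γ) :
    G m n α β γ =
      ((β + γ) / (1 - α)) ^ n * probSumEq m α n ((α * β + γ) / (β + γ)) m := by
  have hα : 1 - α ≠ 0 := by linarith
  have hβγ : β + γ ≠ 0 := by nlinarith [mul_nonneg hβ0 (by linarith : 0 ≤ 1 - α)]
  have hβ : (β + γ) / (1 - α) * (1 - (α * β + γ) / (β + γ)) = β := by
    field_simp
    ring
  have hαβγ : (β + γ) / (1 - α) * ((α * β + γ) / (β + γ)) * (1 - α) = α * β + γ := by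
    field_simp
  rw [pow_mul_probSumEq, hβ, hαβγ, sum_choose_mul_choose_mul_add_pow, G_eq_sum_choose]

theorem G_eq_binom_prob_second (m n : ℕ) (α β γ : ℝ)
    (hα0 : 0 ≤ α) (hα1 : α < 1) (hβ0 : 0 ≤ β) (hβ1 : β < 1) (hγ : 0 < α * β + γ) :
    G m n α β γ =
      ((β + γ) / (1 - α)) ^ n * probSumEq m α n ((α * β + γ) / (β + γ)) m :=
  G_eq_binom_prob_second_general m n α β γ hα1 hβ0 hγ
end

section
/- Let m, n be nonnegative integers and let α, β, γ be reals with 0 ≤ α < 1, 0 ≤ β < 1 and α + β + γ = 1. Then G(m,n;α,β,γ) = P( ξ_m^{(α)} + η_n^{(1−β)} = m ) = P( ξ_n^{(β)} + η_m^{(1−α)} = n ), where in each probability the two binomial random variables are independent with the indicated parameters. -/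
open MeasureTheory ProbabilityTheory Filter

/-!
Summing over the common value `r = m − ξ = η`, the probability `P(ξ_m^{(α)} + η_n^{(1−β)} = m)`
is `Σ_r C(m,r) C(n,r) α^{m−r} β^{n−r} ((1−α)(1−β))^r`, and `(1−α)(1−β) = αβ + γ`.
Expanding `(αβ + γ)^r` binomially and collecting the powers of `γ` with the identity
`Σ_r C(m,r) C(n,r) C(r,s) = C(m,s) C(m+n−s, n−s) = (m+n−s)! / ((m−s)! (n−s)! s!)` gives `G`.
The second probability follows from the symmetry `G(m,n;α,β,γ) = G(n,m;β,α,γ)`.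
-/

open Finset Nat

namespace Nat

theorem sum_range_choose_mul_choose_mul_choose {m n s : ℕ} (hsm : s ≤ m) (hsn : s ≤ n) :
    ∑ r ∈ range (min m n + 1), m.choose r * n.choose r * r.choose s =
      m.choose s * (m + n - s).choose (n - s) := by
  have hlow : ∑ r ∈ range s, m.choose r * n.choose r * r.choose s = 0 :=
    sum_eq_zero fun r hr => by rw [choose_eq_zero_of_lt (mem_range.1 hr), mul_zero]
  rw [← sum_range_add_sum_Ico _ (by omega : s ≤ min m n + 1), hlow, zero_add,
    sum_Ico_eq_sum_range]
  calc ∑ i ∈ range (min m n + 1 - s), m.choose (s + i) * n.choose (s + i) * (s + i).choose s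
      = ∑ i ∈ range (n - s + 1), m.choose s * ((m - s).choose i * n.choose (n - s - i)) := by
        refine sum_subset_zero_on_sdiff (range_subset_range.2 (by omega)) (fun i hi => ?_)
          (fun i hi => ?_)
        · simp only [Finset.mem_sdiff, mem_range] at hi
          rw [choose_eq_zero_of_lt (by omega : m - s < i), zero_mul, mul_zero]
        · rw [mem_range] at hi
          rw [← choose_symm (by omega : s + i ≤ n), mul_right_comm, choose_mul (le_add_right s i),
            Nat.add_sub_cancel_left, Nat.sub_sub, mul_assoc]
    _ = m.choose s * (m - s + n).choose (n - s) := by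
        rw [← mul_sum, add_choose_eq, Finset.Nat.sum_antidiagonal_eq_sum_range_succ_mk]
    _ = m.choose s * (m + n - s).choose (n - s) := by rw [show m - s + n = m + n - s by omega]

theorem choose_mul_choose_mul_factorial_mul_factorial_mul_factorial {m n s : ℕ} (hsm : s ≤ m)
    (hsn : s ≤ n) :
    m.choose s * (m + n - s).choose (n - s) * ((m - s)! * (n - s)! * s !) = (m + n - s)! := by
  have hm := choose_mul_factorial_mul_factorial hsm
  have hmn := choose_mul_factorial_mul_factorial (show n - s ≤ m + n - s by omega)
  rw [show m + n - s - (n - s) = m by omega] at hmn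
  rw [← hmn, ← hm]
  ring

end Nat

theorem G_eq_sum_range_choose_mul_choose (m n : ℕ) (α β γ : ℝ) :
    G m n α β γ = ∑ r ∈ range (min m n + 1),
      (m.choose r * n.choose r : ℝ) * α ^ (m - r) * β ^ (n - r) * (α * β + γ) ^ r := by
  have hexpand : ∀ r ∈ range (min m n + 1),
      (m.choose r * n.choose r : ℝ) * α ^ (m - r) * β ^ (n - r) * (α * β + γ) ^ r =
        ∑ s ∈ range (min m n + 1), ((m.choose r * n.choose r * r.choose s : ℕ) : ℝ) *
          (α ^ (m - s) * β ^ (n - s) * γ ^ s) := by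
    intro r hr
    rw [mem_range] at hr
    rw [add_comm, add_pow, mul_sum]
    refine sum_subset_zero_on_sdiff (range_subset_range.2 (by omega))
      (fun s hs => ?_) (fun s hs => ?_)
    · simp only [Finset.mem_sdiff, mem_range] at hs
      rw [Nat.choose_eq_zero_of_lt (by omega : r < s)]
      simp
    · rw [mem_range] at hs
      rw [show m - s = (m - r) + (r - s) by omega, show n - s = (n - r) + (r - s) by omega]
      push_cast
      ring
  rw [sum_congr rfl hexpand, sum_comm]
  refine sum_congr rfl fun s hs => ?_
  obtain ⟨hsm, hsn⟩ : s ≤ m ∧ s ≤ n := by rw [mem_range] at hs; omega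
  have hcoeff : ((m + n - s)! : ℝ) / ((m - s)! * (n - s)! * s !) =
      (m.choose s * (m + n - s).choose (n - s) : ℕ) := by
    rw [div_eq_iff (by positivity)]
    exact_mod_cast (Nat.choose_mul_choose_mul_factorial_mul_factorial_mul_factorial hsm hsn).symm
  rw [← sum_mul, ← Nat.cast_sum, Nat.sum_range_choose_mul_choose_mul_choose hsm hsn, hcoeff]
  ring

theorem probSumEq_self_eq_sum_range_choose_mul_choose (m n : ℕ) (p q : ℝ) :
    probSumEq m p n q m = ∑ r ∈ range (min m n + 1),
      (m.choose r * n.choose r : ℝ) * p ^ (m - r) * (1 - q) ^ (n - r) * ((1 - p) * q) ^ r := by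
  unfold probSumEq binomPMF
  rw [← sum_range_reflect]
  symm
  refine sum_subset_zero_on_sdiff (range_subset_range.2 (by omega)) (fun r hr => ?_)
    (fun r hr => ?_)
  · simp only [Finset.mem_sdiff, mem_range] at hr
    rw [show m - (m + 1 - 1 - r) = r by omega, Nat.choose_eq_zero_of_lt (by omega : n < r)]
    simp
  · rw [mem_range] at hr
    rw [show m + 1 - 1 - r = m - r by omega, show m - (m - r) = r by omega,
      Nat.choose_symm (by omega), mul_pow]
    ring

theorem G_comm (m n : ℕ) (α β γ : ℝ) : G m n α β γ = G n m β α γ := by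
  unfold G
  rw [min_comm, add_comm n m]
  exact sum_congr rfl fun r _ => by ring

theorem G_eq_probSumEq {m n : ℕ} {α β γ : ℝ} (h : α + β + γ = 1) :
    G m n α β γ = probSumEq m α n (1 - β) m := by
  rw [G_eq_sum_range_choose_mul_choose, probSumEq_self_eq_sum_range_choose_mul_choose,
    sub_sub_cancel, show α * β + γ = (1 - α) * (1 - β) by linear_combination h]

theorem G_eq_binom_prob_boundary_general (m n : ℕ) (α β γ : ℝ) (hsum : α + β + γ = 1) :
    G m n α β γ = probSumEq m α n (1 - β) m ∧
      G m n α β γ = probSumEq n β m (1 - α) n :=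
  ⟨G_eq_probSumEq hsum, (G_comm m n α β γ).trans (G_eq_probSumEq (by linarith))⟩

theorem G_eq_binom_prob_boundary (m n : ℕ) (α β γ : ℝ)
    (hα0 : 0 ≤ α) (hα1 : α < 1) (hβ0 : 0 ≤ β) (hβ1 : β < 1) (hsum : α + β + γ = 1) :
    G m n α β γ = probSumEq m α n (1 - β) m ∧
      G m n α β γ = probSumEq n β m (1 - α) n :=
  G_eq_binom_prob_boundary_general m n α β γ hsum
end

section
/- Suppose the real parameters satisfy αβγ ≤ 0, |β| = 1 and |α| = |γ| < 1. Then for all fixed reals s, t > 0: lim_{n→∞} n^{−1} Var(Y^{(n)}(s,t)) = t / (1 − γ²). -/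
/-!
Under the sign condition and `|β| = 1`, `|α| = |γ|`, one has `γ = -αβ`, so the recursion factors
into two one-dimensional AR(1) recursions and `X k ℓ = ∑_{i<k} ∑_{j<ℓ} α^i β^j ε_{k-i,ℓ-j}`.
The noise variables in this sum are independent with unit variance, hence
`Var X k ℓ = (∑_{i<k} α^{2i}) (∑_{j<ℓ} β^{2j}) = ℓ ∑_{i<k} γ^{2i}`; with `k = ⌊ns⌋` and
`ℓ = ⌊nt⌋`, dividing by `n` gives the limit `t · 1/(1 - γ²)`.
-/

open MeasureTheory ProbabilityTheory Filter Finset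

section Recursion

variable {R : Type*} [CommRing R]

theorem eq_sum_pow_mul_of_succ_eq (a : R) {u v : ℕ → R} (h0 : u 0 = 0)
    (hsucc : ∀ n, u (n + 1) = a * u n + v (n + 1)) (n : ℕ) :
    u n = ∑ i ∈ range n, a ^ i * v (n - i) := by
  induction n with
  | zero => simp [h0]
  | succ n ih =>
    rw [hsucc, ih, sum_range_succ', mul_sum]
    simp only [pow_succ, Nat.succ_sub_succ, pow_zero, one_mul, Nat.sub_zero]
    congr 1
    exact sum_congr rfl fun i _ => by ring

def movingAverage (α β : R) (e : ℕ → ℕ → R) (k ℓ : ℕ) : R :=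
  ∑ i ∈ range k, ∑ j ∈ range ℓ, α ^ i * β ^ j * e (k - i) (ℓ - j)

/-- With diagonal coefficient `-αβ` the recursion reads `(1 - α S₁)(1 - β S₂) x = e` for the
backward shifts `S₁, S₂`, and each factor is an AR(1) recursion. -/
theorem eq_movingAverage_of_rec (α β : R) {x e : ℕ → ℕ → R}
    (hrec : ∀ k ℓ, x (k + 1) (ℓ + 1) =
      α * x k (ℓ + 1) + β * x (k + 1) ℓ - α * β * x k ℓ + e (k + 1) (ℓ + 1))
    (hk0 : ∀ k, x k 0 = 0) (h0ℓ : ∀ ℓ, x 0 ℓ = 0) (k ℓ : ℕ) :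
    x k ℓ = movingAverage α β e k ℓ := by
  have hrow : ∀ k ℓ, x (k + 1) ℓ - α * x k ℓ = ∑ j ∈ range ℓ, β ^ j * e (k + 1) (ℓ - j) :=
    fun k => eq_sum_pow_mul_of_succ_eq β (by simp [hk0])
      fun ℓ => by rw [hrec]; ring
  rw [eq_sum_pow_mul_of_succ_eq α (u := fun k => x k ℓ)
    (v := fun k => ∑ j ∈ range ℓ, β ^ j * e k (ℓ - j)) (h0ℓ ℓ)
    (fun k => by rw [← hrow]; ring) k, movingAverage]
  refine sum_congr rfl fun i _ => ?_
  rw [mul_sum]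
  exact sum_congr rfl fun j _ => by ring

end Recursion

theorem iIndepFun.indepFun_of_subtype {Ω ι 𝓧 : Type*} {_ : MeasurableSpace Ω}
    [MeasurableSpace 𝓧] {μ : Measure Ω} {S : ι → Prop} {f : ι → Ω → 𝓧}
    (h : iIndepFun (fun p : Subtype S => f p) μ) {i j : ι} (hi : S i) (hj : S j)
    (hij : i ≠ j) : IndepFun (f i) (f j) μ :=
  h.indepFun (i := ⟨i, hi⟩) (j := ⟨j, hj⟩) (by simpa [Subtype.ext_iff] using hij)

theorem variance_sum_const_mul {Ω ι : Type*} {_ : MeasurableSpace Ω} {μ : Measure Ω}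
    {Z : ι → Ω → ℝ} {s : Finset ι} (c : ι → ℝ) (hZ : ∀ i ∈ s, MemLp (Z i) 2 μ)
    (hindep : Set.Pairwise ↑s fun i j => IndepFun (Z i) (Z j) μ) :
    variance (fun ω => ∑ i ∈ s, c i * Z i ω) μ = ∑ i ∈ s, c i ^ 2 * variance (Z i) μ := by
  have hsum : (fun ω => ∑ i ∈ s, c i * Z i ω) = ∑ i ∈ s, fun ω => c i * Z i ω := by
    ext ω; simp
  rw [hsum, IndepFun.variance_sum (fun i hi => (hZ i hi).const_mul (c i))
    fun i hi j hj hij => (hindep hi hj hij).comp (measurable_const_mul _) (measurable_const_mul _)]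
  exact sum_congr rfl fun i _ => variance_const_mul _ _ _

theorem variance_movingAverage {Ω : Type*} [MeasurableSpace Ω] {P : Measure Ω}
    [IsProbabilityMeasure P] {ε : ℕ → ℕ → Ω → ℝ} (hmeas : ∀ k ℓ, Measurable (ε k ℓ))
    (hindep : iIndepFun (fun p : {p : ℕ × ℕ // 1 ≤ p.1 ∧ 1 ≤ p.2} => ε p.1.1 p.1.2) P)
    (hvar : ∀ k ℓ, 1 ≤ k → 1 ≤ ℓ → variance (ε k ℓ) P = 1) (α β : ℝ) (k ℓ : ℕ) :
    variance (fun ω => movingAverage α β (fun a b => ε a b ω) k ℓ) P =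
      (∑ i ∈ range k, (α ^ 2) ^ i) * ∑ j ∈ range ℓ, (β ^ 2) ^ j := by
  have hmem : ∀ p ∈ range k ×ˢ range ℓ, 1 ≤ k - p.1 ∧ 1 ≤ ℓ - p.2 := by
    intro p hp
    simp only [mem_product, mem_range] at hp
    omega
  have hsum : (fun ω => movingAverage α β (fun a b => ε a b ω) k ℓ) =
      fun ω => ∑ p ∈ range k ×ˢ range ℓ, α ^ p.1 * β ^ p.2 * ε (k - p.1) (ℓ - p.2) ω := by
    ext ω; rw [movingAverage, sum_product]
  rw [hsum]
  refine (variance_sum_const_mul (s := range k ×ˢ range ℓ)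
    (Z := fun p => ε (k - p.1) (ℓ - p.2)) (fun p => α ^ p.1 * β ^ p.2) ?_ ?_).trans ?_
  · intro p hp
    obtain ⟨hk, hℓ⟩ := hmem p hp
    exact memLp_two_of_variance_ne_zero (hmeas _ _).aestronglyMeasurable
      (by rw [hvar _ _ hk hℓ]; exact one_ne_zero)
  · intro p hp q hq hpq
    have hp' := mem_product.1 hp; have hq' := mem_product.1 hq
    simp only [mem_range] at hp' hq'
    have hne : (k - p.1, ℓ - p.2) ≠ (k - q.1, ℓ - q.2) := fun h =>
      hpq (by simp only [Prod.ext_iff] at h ⊢; omega)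
    exact iIndepFun.indepFun_of_subtype (S := fun p : ℕ × ℕ => 1 ≤ p.1 ∧ 1 ≤ p.2)
      (f := fun p : ℕ × ℕ => ε p.1 p.2) hindep (hmem p hp) (hmem q hq) hne
  · rw [sum_mul_sum, sum_product]
    refine sum_congr rfl fun i hi => sum_congr rfl fun j hj => ?_
    obtain ⟨hk, hℓ⟩ := hmem (i, j) (mem_product.2 ⟨hi, hj⟩)
    rw [hvar _ _ hk hℓ]
    ring

theorem eq_neg_mul_of_mul_mul_nonpos {α β γ : ℝ} (hsign : α * β * γ ≤ 0) (hβ : |β| = 1)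
    (hαγ : |α| = |γ|) : γ = -(α * β) := by
  have hβ2 : β ^ 2 = 1 := by rw [← sq_abs, hβ, one_pow]
  have hα2 : α ^ 2 = γ ^ 2 := by rw [← sq_abs, hαγ, sq_abs]
  have hfactor : (γ * β - α) * (γ * β + α) = 0 := by linear_combination γ ^ 2 * hβ2 - hα2
  rcases mul_eq_zero.1 hfactor with h | h
  · -- then `αβγ = γ²`, so the sign condition forces `α = γ = 0`
    have hγ : γ = 0 := by nlinarith
    simp_all
  · linear_combination β * h - γ * hβ2

theorem tendsto_floor_mul_geom_sum {r s t : ℝ} (hr₀ : 0 ≤ r) (hr₁ : r < 1) (hs : 0 < s)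
    (ht : 0 ≤ t) :
    Tendsto (fun n : ℕ => (n : ℝ)⁻¹ * (⌊n * t⌋₊ * ∑ i ∈ range ⌊n * s⌋₊, r ^ i)) atTop
      (nhds (t / (1 - r))) := by
  have hfloor : Tendsto (fun n : ℕ => (⌊n * t⌋₊ : ℝ) / n) atTop (nhds t) := by
    simpa [Function.comp_def, mul_comm] using
      (tendsto_nat_floor_mul_div_atTop ht).comp tendsto_natCast_atTop_atTop
  have hgeom : Tendsto (fun n : ℕ => ∑ i ∈ range ⌊n * s⌋₊, r ^ i) atTop (nhds (1 - r)⁻¹) :=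
    (hasSum_geometric_of_lt_one hr₀ hr₁).tendsto_sum_nat.comp
      (by simpa [mul_comm] using tendsto_nat_floor_mul_atTop s hs)
  rw [div_eq_mul_inv]
  convert hfloor.mul hgeom using 2 with n
  ring

theorem variance_limit_edge_beta_general
    {Ω : Type*} [MeasurableSpace Ω] (P : Measure Ω) [IsProbabilityMeasure P]
    (ε : ℕ → ℕ → Ω → ℝ)
    (hmeas : ∀ k ℓ : ℕ, Measurable (ε k ℓ))
    (hindep : iIndepFun
      (fun p : {p : ℕ × ℕ // 1 ≤ p.1 ∧ 1 ≤ p.2} => ε p.1.1 p.1.2) P)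
    (hvar : ∀ k ℓ : ℕ, 1 ≤ k → 1 ≤ ℓ → variance (ε k ℓ) P = 1)
    (α β γ : ℝ)
    (X : ℕ → ℕ → Ω → ℝ)
    (hrec : ∀ k ℓ : ℕ, 1 ≤ k → 1 ≤ ℓ → ∀ ω : Ω,
      X k ℓ ω = α * X (k - 1) ℓ ω + β * X k (ℓ - 1) ω + γ * X (k - 1) (ℓ - 1) ω + ε k ℓ ω)
    (hbd1 : ∀ k : ℕ, ∀ ω : Ω, X k 0 ω = 0)
    (hbd2 : ∀ ℓ : ℕ, ∀ ω : Ω, X 0 ℓ ω = 0)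
    (hsign : α * β * γ ≤ 0) (hβ : |β| = 1) (hαγ : |α| = |γ|) (hγ : |γ| < 1) :
    ∀ s t : ℝ, 0 < s → 0 < t →
      Tendsto (fun n : ℕ => ((n : ℝ))⁻¹ * variance (X ⌊(n : ℝ) * s⌋₊ ⌊(n : ℝ) * t⌋₊) P)
        atTop (nhds (t / (1 - γ ^ 2))) := by
  intro s t hs ht
  have hγαβ := eq_neg_mul_of_mul_mul_nonpos hsign hβ hαγ
  have hX : ∀ k ℓ, X k ℓ = fun ω => movingAverage α β (fun a b => ε a b ω) k ℓ :=
    fun k ℓ => funext fun ω => eq_movingAverage_of_rec α β (x := fun k ℓ => X k ℓ ω)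
      (fun k ℓ => by
        simpa [hγαβ, sub_eq_add_neg] using hrec (k + 1) (ℓ + 1) (by omega) (by omega) ω)
      (hbd1 · ω) (hbd2 · ω) k ℓ
  have hvarX : ∀ k ℓ, variance (X k ℓ) P = ℓ * ∑ i ∈ range k, (γ ^ 2) ^ i := by
    intro k ℓ
    rw [hX, variance_movingAverage hmeas hindep hvar, ← sq_abs α, hαγ, sq_abs, ← sq_abs β, hβ]
    simp [mul_comm]
  simpa only [hvarX] using tendsto_floor_mul_geom_sum (sq_nonneg γ)
    ((sq_lt_one_iff_abs_lt_one γ).2 hγ) hs ht.le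

theorem variance_limit_edge_beta
    {Ω : Type*} [MeasurableSpace Ω] (P : Measure Ω) [IsProbabilityMeasure P]
    (ε : ℕ → ℕ → Ω → ℝ)
    (hmeas : ∀ k ℓ : ℕ, Measurable (ε k ℓ))
    (hindep : iIndepFun
      (fun p : {p : ℕ × ℕ // 1 ≤ p.1 ∧ 1 ≤ p.2} => ε p.1.1 p.1.2) P)
    (hmean : ∀ k ℓ : ℕ, 1 ≤ k → 1 ≤ ℓ → ∫ ω, ε k ℓ ω ∂P = 0)
    (hvar : ∀ k ℓ : ℕ, 1 ≤ k → 1 ≤ ℓ → variance (ε k ℓ) P = 1)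
    (α β γ : ℝ)
    (X : ℕ → ℕ → Ω → ℝ)
    (hrec : ∀ k ℓ : ℕ, 1 ≤ k → 1 ≤ ℓ → ∀ ω : Ω,
      X k ℓ ω = α * X (k - 1) ℓ ω + β * X k (ℓ - 1) ω + γ * X (k - 1) (ℓ - 1) ω + ε k ℓ ω)
    (hbd1 : ∀ k : ℕ, ∀ ω : Ω, X k 0 ω = 0)
    (hbd2 : ∀ ℓ : ℕ, ∀ ω : Ω, X 0 ℓ ω = 0)
    (hsign : α * β * γ ≤ 0) (hβ : |β| = 1) (hαγ : |α| = |γ|) (hγ : |γ| < 1) :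
    ∀ s t : ℝ, 0 < s → 0 < t →
      Tendsto (fun n : ℕ => ((n : ℝ))⁻¹ * variance (X ⌊(n : ℝ) * s⌋₊ ⌊(n : ℝ) * t⌋₊) P)
        atTop (nhds (t / (1 - γ ^ 2))) :=
  variance_limit_edge_beta_general P ε hmeas hindep hvar α β γ X hrec hbd1 hbd2 hsign hβ hαγ hγ
end
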